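/- Let n, m ∈ ℕ, let f : ℝⁿ × ℝᵐ → ℝⁿ be a state transition map, let X ⊆ ℝⁿ and U ⊆ ℝᵐ be constraint sets, let γ > 0, and let horizons M < N. Let F : ℝⁿ → (Fin (N − M) → ℝⁿ) be a map (the neural network approximating the tail). Suppose there exist sequences x : Fin (N+1) → ℝⁿ and u : Fin N → ℝᵐ with x_0 = x_init, x_{k+1} = f(x_k, u_k) for all k < N, u_k ∈ U for all k < N, x_k ∈ X for all k ≤ M, and x_k ∈ X ⊖ B_γ for all M < k ≤ N (i.e., the constraint-tightened full-horizon problem is feasible at x_init), and suppose that ‖F(x_M)_j − x_{M+1+j}‖∞ < γ for every j ∈ Fin (N − M). Then the Neural Horizon problem is feasible at x_init: there exist sequences x' : Fin (M+1) → ℝⁿ and u' : Fin (M+1) → ℝᵐ with x'_0 = x_init, x'_{k+1} = f(x'_k, u'_k) for all k < M, x'_k ∈ X for all k ≤ M, u'_k ∈ U for all k ≤ M, and F(x'_M)_j ∈ X for every j ∈ Fin (N − M). -/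

import Mathlib

/-!
The truncation at step `M` of a feasible tightened trajectory is a Neural Horizon witness: each
state `F(x_M)_j` predicted by the network lies within `γ` of the state `x_{M+1+j}` of
`X ⊖ B_γ`, hence in `X`.
-/

/-- The Pontryagin difference `X ⊖ B_γ` of a set `X ⊆ ℝⁿ` with the closed
`∞`-norm ball of radius `γ` (note that the norm on `Fin n → ℝ` is the sup norm). -/
def pontryaginDiff (n : ℕ) (X : Set (Fin n → ℝ)) (γ : ℝ) : Set (Fin n → ℝ) :=
  {y | ∀ z : Fin n → ℝ, ‖z‖ ≤ γ → y + z ∈ X}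

theorem mem_of_mem_pontryaginDiff_of_norm_sub_le {n : ℕ} {X : Set (Fin n → ℝ)} {γ : ℝ}
    {y p : Fin n → ℝ} (hy : y ∈ pontryaginDiff n X γ) (hp : ‖p - y‖ ≤ γ) : p ∈ X :=
  add_sub_cancel y p ▸ hy (p - y) hp

/-- If the constraint-tightened full-horizon problem is feasible at `x_init` and the
neural network `F` approximates the feasible tail within `γ` in the sup norm, then
the Neural Horizon problem is feasible at `x_init`. -/
theorem neuralHorizon_feasible_of_tightened_feasible
    (n m : ℕ) (f : (Fin n → ℝ) × (Fin m → ℝ) → (Fin n → ℝ))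
    (X : Set (Fin n → ℝ)) (U : Set (Fin m → ℝ)) (γ : ℝ)
    (M N : ℕ) (hMN : M < N)
    (F : (Fin n → ℝ) → (Fin (N - M) → Fin n → ℝ))
    (xinit : Fin n → ℝ)
    (x : Fin (N + 1) → Fin n → ℝ) (u : Fin N → Fin m → ℝ)
    (hx0 : x 0 = xinit)
    (hdyn : ∀ k : Fin N, x k.succ = f (x k.castSucc, u k))
    (hu : ∀ k : Fin N, u k ∈ U)
    (hxX : ∀ k : Fin (N + 1), (k : ℕ) ≤ M → x k ∈ X)
    (hxTight : ∀ k : Fin (N + 1), M < (k : ℕ) → x k ∈ pontryaginDiff n X γ)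
    (hF : ∀ j : Fin (N - M),
      ‖F (x ⟨M, by omega⟩) j - x ⟨M + 1 + (j : ℕ), by omega⟩‖ < γ) :
    ∃ (x' : Fin (M + 1) → Fin n → ℝ) (u' : Fin (M + 1) → Fin m → ℝ),
      x' 0 = xinit ∧
      (∀ k : Fin M, x' k.succ = f (x' k.castSucc, u' k.castSucc)) ∧
      (∀ k : Fin (M + 1), x' k ∈ X) ∧
      (∀ k : Fin (M + 1), u' k ∈ U) ∧
      (∀ j : Fin (N - M), F (x' (Fin.last M)) j ∈ X) :=
  ⟨fun k => x (Fin.castLE (by omega) k), fun k => u (Fin.castLE hMN k), hx0,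
    fun k => hdyn (Fin.castLE hMN.le k), fun k => hxX _ (Nat.lt_succ_iff.mp k.isLt),
    fun k => hu _, fun j => mem_of_mem_pontryaginDiff_of_norm_sub_le
      (hxTight ⟨M + 1 + j, by omega⟩ (by dsimp only; omega)) (hF j).le⟩
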